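/- Let 𝔡 be a set of integers, each at least 2, with at least two elements, that is uniformly log-discrete: there exists δ > 0 such that |log d − log d'| > δ for all distinct d, d' ∈ 𝔡. Let c ∈ ℚ be nonzero and let S = {z^d + c : d ∈ 𝔡}. Then for every ε > 0 there exist b > 0 and B₀ such that for every P ∈ ℚ with H(P) > B₀ there are constants c₁, c₂ > 0 and B₁ with c₁·(log B)^b ≤ #{L : L a finite list of elements of S with H(L(P)) ≤ B} ≤ c₂·(log B)^{b+ε} for all real B ≥ B₁. -/

import Mathlib

open Polynomial

/-- Multiplicative Weil height of a rational number: `H(p/q) = max(|p|, q)`. -/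
noncomputable def ratH (x : ℚ) : ℝ := max |(x.num : ℝ)| (x.den : ℝ)

/-- Evaluation of a finite list of polynomials `[φ₁, …, φₘ]` at `P`:
`φ₁(φ₂(⋯φₘ(P)⋯))`, the empty list acting as the identity. -/
def applyList (L : List (Polynomial ℚ)) (P : ℚ) : ℚ :=
  L.foldr (fun φ x => φ.eval x) P


theorem ratlem (r : ℚ) (m n : ℤ) (hn : 0 < n) (h : r * (n:ℚ) = (m:ℚ)) : (r.den : ℤ) ≤ n ∧ |r.num| ≤ |m| := by
  have hden : (r.den : ℚ) ≠ 0 := by exact_mod_cast r.den_nz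
  have key : (r.num : ℚ) = r * r.den := by
    have := div_mul_cancel₀ (r.num:ℚ) hden
    rw [Rat.num_div_den r] at this
    exact this.symm
  have hq : (r.num : ℚ) * n = m * r.den := by rw [key, mul_assoc, mul_comm (r.den:ℚ) _, ← mul_assoc, h]
  have hz : r.num * n = m * (r.den : ℤ) := by exact_mod_cast hq
  have hdvd : (r.den : ℤ) ∣ n := by
    have h1 : (r.den : ℤ) ∣ r.num * n := ⟨m, by linarith⟩
    have h2 : IsCoprime (r.num) (r.den : ℤ) := by
      rw [Int.isCoprime_iff_gcd_eq_one]; exact r.reduced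
    exact (h2.symm).dvd_of_dvd_mul_left h1
  have hle : (r.den : ℤ) ≤ n := Int.le_of_dvd hn hdvd
  refine ⟨hle, ?_⟩
  have habs : |r.num| * n = |m| * r.den := by
    have := congrArg abs hz
    rwa [abs_mul, abs_mul, abs_of_pos hn, abs_of_pos (by positivity : (0:ℤ) < (r.den:ℤ))] at this
  nlinarith [abs_nonneg r.num, abs_nonneg m, (by positivity : (0:ℤ) < (r.den:ℤ))]

theorem one_le_ratH (x : ℚ) : 1 ≤ ratH x :=
  le_max_of_le_right (by exact_mod_cast x.pos.nat_succ_le)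

theorem ratH_nonneg (x : ℚ) : 0 ≤ ratH x := le_trans zero_le_one (one_le_ratH x)

theorem ratH_neg (x : ℚ) : ratH (-x) = ratH x := by
  unfold ratH
  rw [Rat.neg_num, Rat.neg_den]
  push_cast
  rw [abs_neg]

theorem ratH_pow (x : ℚ) (d : ℕ) : ratH (x ^ d) = ratH x ^ d := by
  unfold ratH
  rw [Rat.num_pow, Rat.den_pow]
  push_cast
  rw [abs_pow]
  rcases le_total |(x.num:ℝ)| (x.den:ℝ) with h | h
  · rw [max_eq_right h, max_eq_right (pow_le_pow_left₀ (abs_nonneg _) h d)]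
  · rw [max_eq_left h, max_eq_left (pow_le_pow_left₀ (Nat.cast_nonneg _) h d)]

theorem ratH_add_le (u v : ℚ) : ratH (u + v) ≤ 2 * ratH u * ratH v := by
  have hu : (u.num : ℚ) = u * u.den := by
    have := div_mul_cancel₀ (u.num:ℚ) (by exact_mod_cast u.den_nz : (u.den:ℚ) ≠ 0)
    rw [Rat.num_div_den u] at this; exact this.symm
  have hv : (v.num : ℚ) = v * v.den := by
    have := div_mul_cancel₀ (v.num:ℚ) (by exact_mod_cast v.den_nz : (v.den:ℚ) ≠ 0)
    rw [Rat.num_div_den v] at this; exact this.symm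
  have key : (u + v) * ((u.den * v.den : ℤ) : ℚ) = ((u.num * v.den + v.num * u.den : ℤ) : ℚ) := by
    push_cast
    rw [hu, hv]; ring
  obtain ⟨h1, h2⟩ := ratlem (u+v) _ _ (by positivity) key
  have hden : ((u+v).den : ℝ) ≤ (u.den : ℝ) * v.den := by exact_mod_cast h1
  have hnum : |((u+v).num : ℝ)| ≤ |(u.num:ℝ)| * v.den + |(v.num:ℝ)| * u.den := by
    have := h2.trans (abs_add_le _ _)
    calc |((u+v).num : ℝ)| ≤ |((u.num * v.den : ℤ) : ℝ)| + |((v.num * u.den : ℤ):ℝ)| := by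
          exact_mod_cast this
    _ = |(u.num:ℝ)| * v.den + |(v.num:ℝ)| * u.den := by
          push_cast [abs_mul]
          rw [abs_of_nonneg (by positivity : (0:ℝ) ≤ (v.den:ℝ)), abs_of_nonneg (by positivity : (0:ℝ) ≤ (u.den:ℝ))]
  unfold ratH
  have h3 : |(u.num:ℝ)| ≤ max |(u.num:ℝ)| (u.den:ℝ) := le_max_left _ _
  have h4 : (u.den:ℝ) ≤ max |(u.num:ℝ)| (u.den:ℝ) := le_max_right _ _
  have h5 : |(v.num:ℝ)| ≤ max |(v.num:ℝ)| (v.den:ℝ) := le_max_left _ _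
  have h6 : (v.den:ℝ) ≤ max |(v.num:ℝ)| (v.den:ℝ) := le_max_right _ _
  have h7 : (0:ℝ) ≤ max |(u.num:ℝ)| (u.den:ℝ) := le_trans (abs_nonneg _) h3
  have h8 : (0:ℝ) ≤ max |(v.num:ℝ)| (v.den:ℝ) := le_trans (abs_nonneg _) h5
  apply max_le
  · nlinarith [abs_nonneg ((u.num:ℝ)), abs_nonneg ((v.num:ℝ)), Nat.cast_nonneg (α := ℝ) u.den, Nat.cast_nonneg (α := ℝ) v.den]
  · nlinarith [Nat.cast_nonneg (α := ℝ) u.den, Nat.cast_nonneg (α := ℝ) v.den]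


def listsF : ℕ → Finset (List ℕ)
  | 0 => ∅
  | (n+1) => insert [] ((Finset.Icc 2 (n+1)).attach.biUnion
      (fun d => ((listsF ((n+1)/(d:ℕ))).image (fun ℓ => (d:ℕ) :: ℓ))))
  termination_by n => n
  decreasing_by
    exact Nat.div_lt_self (Nat.succ_pos n) (by
      have := d.2
      simp only [Finset.mem_Icc] at this
      omega)

theorem mem_listsF (N : ℕ) (ℓ : List ℕ) :
    ℓ ∈ listsF N ↔ ((∀ d ∈ ℓ, 2 ≤ d) ∧ ℓ.prod ≤ N ∧ 1 ≤ N) := by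
  induction N using Nat.strong_induction_on generalizing ℓ with
  | _ N IH =>
    match N with
    | 0 => simp [listsF]
    | (M+1) =>
      rw [listsF]
      simp only [Finset.mem_insert, Finset.mem_biUnion, Finset.mem_attach, Finset.mem_image,
        true_and, Subtype.exists]
      constructor
      · rintro (rfl | ⟨d, hd, t, ht, rfl⟩)
        · simp
        · simp only [Finset.mem_Icc] at hd
          have hdlt : (M+1)/d < M+1 := Nat.div_lt_self (Nat.succ_pos M) (by omega)
          obtain ⟨h1, h2, h3⟩ := (IH _ hdlt t).mp ht
          refine ⟨?_, ?_, Nat.succ_le_succ (Nat.zero_le M)⟩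
          · intro e he
            rcases List.mem_cons.mp he with rfl | he
            · exact hd.1
            · exact h1 e he
          · rw [List.prod_cons]
            calc d * t.prod ≤ d * ((M+1)/d) := Nat.mul_le_mul_left d h2
            _ ≤ M+1 := Nat.mul_div_le (M+1) d
      · rintro ⟨h1, h2, -⟩
        match ℓ with
        | [] => exact Or.inl rfl
        | (d :: t) =>
          right
          have hd2 : 2 ≤ d := h1 d List.mem_cons_self
          have htpos : 0 < t.prod := List.prod_pos (fun a ha => lt_of_lt_of_le (by norm_num) (h1 a (List.mem_cons_of_mem d ha)))
          rw [List.prod_cons] at h2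
          have hdle : d ≤ M+1 := le_trans (Nat.le_mul_of_pos_right d htpos) h2
          have hdlt : (M+1)/d < M+1 := Nat.div_lt_self (Nat.succ_pos M) (by omega)
          refine ⟨d, Finset.mem_Icc.mpr ⟨hd2, hdle⟩, t, ?_, rfl⟩
          rw [IH _ hdlt t]
          refine ⟨fun e he => h1 e (List.mem_cons_of_mem d he), ?_, ?_⟩
          · rw [Nat.le_div_iff_mul_le (by omega : 0 < d), mul_comm]; exact h2
          · rw [Nat.le_div_iff_mul_le (by omega : 0 < d), one_mul]
            exact le_trans (Nat.le_mul_of_pos_right d htpos) h2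

theorem sum_inv_sq_le (M : ℕ) (hM : 1 ≤ M) :
    ∑ d ∈ Finset.Icc 2 M, (1 / (d:ℝ))^2 ≤ 1 - 1/(M:ℝ) := by
  induction M with
  | zero => omega
  | succ M IH =>
    rcases Nat.eq_or_lt_of_le hM with h | h
    · simp [← h]
    · have hM1 : 1 ≤ M := by omega
      have h2 : (2:ℕ) ≤ M + 1 := by omega
      rw [← Finset.insert_Icc_right_eq_Icc_add_one (by omega : 2 ≤ M+1),
        Finset.sum_insert (by simp)]
      have hIH := IH hM1
      have hpos : (0:ℝ) < M := by exact_mod_cast hM1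
      have : (1/((M:ℝ)+1))^2 ≤ 1/(M:ℝ) - 1/((M:ℝ)+1) := by
        rw [div_sub_div _ _ (ne_of_gt hpos) (by positivity)]
        rw [div_pow, one_pow, div_le_div_iff₀ (by positivity) (by positivity)]
        ring_nf
        nlinarith
      push_cast
      linarith

theorem card_listsF_le (N : ℕ) : ((listsF N).card : ℝ) ≤ (N:ℝ)^2 := by
  induction N using Nat.strong_induction_on with
  | _ N IH =>
    match N with
    | 0 => simp [listsF]
    | (M+1) =>
      rw [listsF]
      have step1 : (insert [] ((Finset.Icc 2 (M+1)).attach.biUnion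
          (fun d => ((listsF ((M+1)/(d:ℕ))).image (fun ℓ => (d:ℕ) :: ℓ))))).card
          ≤ 1 + ∑ d ∈ (Finset.Icc 2 (M+1)).attach, (listsF ((M+1)/(d:ℕ))).card := by
        apply le_trans (Finset.card_insert_le _ _)
        rw [add_comm]
        apply Nat.add_le_add_left
        apply le_trans Finset.card_biUnion_le
        apply Finset.sum_le_sum
        intro d _
        exact Finset.card_image_le
      apply le_trans (Nat.cast_le.mpr step1)
      push_cast
      have step2 : ∀ d ∈ (Finset.Icc 2 (M+1)).attach,
          ((listsF ((M+1)/(d:ℕ))).card : ℝ) ≤ (((M+1):ℝ)/(d:ℕ))^2 := by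
        intro d _
        have hd := d.2
        simp only [Finset.mem_Icc] at hd
        have hlt : (M+1)/(d:ℕ) < M+1 := Nat.div_lt_self (Nat.succ_pos M) (by omega)
        refine le_trans (IH _ hlt) ?_
        have := Nat.cast_div_le (α := ℝ) (m := M+1) (n := (d:ℕ))
        push_cast at this ⊢
        have h0 : (0:ℝ) ≤ ((M+1)/(d:ℕ) : ℕ) := by positivity
        nlinarith
      have step3 : ∑ d ∈ (Finset.Icc 2 (M+1)).attach, ((listsF ((M+1)/(d:ℕ))).card : ℝ)
          ≤ ∑ d ∈ (Finset.Icc 2 (M+1)).attach, (((M+1):ℝ)/(d:ℕ))^2 :=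
        Finset.sum_le_sum step2
      have step4 : ∑ d ∈ (Finset.Icc 2 (M+1)).attach, (((M+1):ℝ)/(d:ℕ))^2
          = ∑ d ∈ Finset.Icc 2 (M+1), (((M+1):ℝ)/(d:ℕ))^2 :=
        Finset.sum_attach (Finset.Icc 2 (M+1)) (fun d => (((M+1):ℝ)/(d:ℕ))^2)
      have step5 : ∑ d ∈ Finset.Icc 2 (M+1), (((M+1):ℝ)/(d:ℕ))^2
          ≤ ((M+1:ℝ))^2 * (1 - 1/((M+1:ℕ):ℝ)) := by
        have := sum_inv_sq_le (M+1) (by omega)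
        have heq : ∀ d ∈ Finset.Icc 2 (M+1), (((M+1):ℝ)/(d:ℕ))^2 = ((M+1:ℝ))^2 * (1/(d:ℕ):ℝ)^2 := by
          intro d _; field_simp
        rw [Finset.sum_congr rfl heq, ← Finset.mul_sum]
        have h0 : (0:ℝ) ≤ ((M+1:ℝ))^2 := by positivity
        push_cast at this ⊢
        nlinarith
      have hM1 : (1:ℝ) ≤ ((M+1:ℕ):ℝ) := by exact_mod_cast Nat.succ_le_succ (Nat.zero_le M)
      push_cast at step5 hM1 ⊢
      have hpos : (0:ℝ) < (M:ℝ)+1 := by linarith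
      have key : ((M:ℝ)+1)^2 * (1 - 1/((M:ℝ)+1)) = ((M:ℝ)+1)^2 - ((M:ℝ)+1) := by
        field_simp
      calc (1:ℝ) + ∑ d ∈ (Finset.Icc 2 (M+1)).attach, ((listsF ((M+1)/(d:ℕ))).card : ℝ)
          ≤ 1 + (((M:ℝ)+1)^2 - ((M:ℝ)+1)) := by
            rw [step4] at step3
            push_cast at step3
            linarith [step5, step3]
      _ ≤ ((M:ℝ)+1)^2 := by linarith


def NSet (D : Set ℕ) (T : ℝ) : Set (List ℕ) :=
  {ℓ | (∀ d ∈ ℓ, d ∈ D) ∧ ((ℓ.prod : ℝ) ≤ T)}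

def NSetK (D : Set ℕ) (k : ℕ) (T : ℝ) : Set (List ℕ) :=
  {ℓ | ℓ ∈ NSet D T ∧ ℓ.length = k}

variable {D : Set ℕ}

theorem prod_pos_of_mem (h2 : ∀ d ∈ D, 2 ≤ d) (ℓ : List ℕ) (h : ∀ d ∈ ℓ, d ∈ D) : 0 < ℓ.prod :=
  List.prod_pos (fun a ha => lt_of_lt_of_le (by norm_num) (h2 a (h a ha)))

theorem two_pow_length_le (h2 : ∀ d ∈ D, 2 ≤ d) (ℓ : List ℕ) (h : ∀ d ∈ ℓ, d ∈ D) : 2^ℓ.length ≤ ℓ.prod := by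
  induction ℓ with
  | nil => simp
  | cons d t IH =>
    rw [List.length_cons, List.prod_cons, pow_succ, mul_comm (2^t.length) 2]
    exact Nat.mul_le_mul (h2 d (h d List.mem_cons_self))
      (IH (fun e he => h e (List.mem_cons_of_mem d he)))


theorem NSet_subset_listsF (h2 : ∀ d ∈ D, 2 ≤ d) (T : ℝ) : NSet D T ⊆ ↑(listsF ⌊T⌋₊) := by
  intro ℓ hℓ
  obtain ⟨ha, hb⟩ := hℓ
  have hpos : 0 < ℓ.prod := prod_pos_of_mem h2 ℓ ha
  have hT1 : (1:ℝ) ≤ T := le_trans (by exact_mod_cast hpos) hb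
  rw [Finset.mem_coe, mem_listsF]
  refine ⟨fun d hd => h2 d (ha d hd), Nat.le_floor hb, Nat.le_floor (by exact_mod_cast hT1)⟩

theorem NSet_finite (h2 : ∀ d ∈ D, 2 ≤ d) (T : ℝ) : (NSet D T).Finite :=
  Set.Finite.subset (Finset.finite_toSet _) (NSet_subset_listsF h2 T)

theorem NSetK_finite (h2 : ∀ d ∈ D, 2 ≤ d) (k : ℕ) (T : ℝ) : (NSetK D k T).Finite :=
  Set.Finite.subset (NSet_finite h2 T) (fun ℓ hℓ => hℓ.1)

theorem ncard_NSet_le (h2 : ∀ d ∈ D, 2 ≤ d) (T : ℝ) (hT : 1 ≤ T) : ((NSet D T).ncard : ℝ) ≤ T^2 := by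
  have h1 : (NSet D T).ncard ≤ (listsF ⌊T⌋₊).card := by
    rw [← Set.ncard_coe_finset]
    exact Set.ncard_le_ncard (NSet_subset_listsF h2 T) (Finset.finite_toSet _)
  calc ((NSet D T).ncard : ℝ) ≤ ((listsF ⌊T⌋₊).card : ℝ) := by exact_mod_cast h1
  _ ≤ ((⌊T⌋₊:ℕ):ℝ)^2 := card_listsF_le _
  _ ≤ T^2 := by
    have := Nat.floor_le (le_trans zero_le_one hT)
    have h0 : (0:ℝ) ≤ ((⌊T⌋₊:ℕ):ℝ) := by positivity
    nlinarith

noncomputable def sigmaD (D : Set ℕ) : ℝ :=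
  sSup {q : ℝ | ∃ N : ℕ, 2 ≤ N ∧ ∃ k : ℕ, q = Real.log ((NSetK D k N).ncard) / Real.log N}

theorem NSetK_zero_two : NSetK D 0 ((2:ℕ):ℝ) = {[]} := by
  ext ℓ
  simp only [NSetK, NSet, Set.mem_setOf_eq, Set.mem_singleton_iff, List.length_eq_zero_iff]
  constructor
  · rintro ⟨-, h⟩; exact h
  · rintro rfl
    refine ⟨⟨by simp, by norm_num⟩, rfl⟩

theorem zero_mem_Q : (0:ℝ) ∈ {q : ℝ | ∃ N : ℕ, 2 ≤ N ∧ ∃ k : ℕ, q = Real.log ((NSetK D k N).ncard) / Real.log N} := by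
  refine ⟨2, le_refl 2, 0, ?_⟩
  rw [NSetK_zero_two, Set.ncard_singleton]
  simp

theorem Q_bddAbove (h2 : ∀ d ∈ D, 2 ≤ d) : BddAbove {q : ℝ | ∃ N : ℕ, 2 ≤ N ∧ ∃ k : ℕ, q = Real.log ((NSetK D k N).ncard) / Real.log N} := by
  refine ⟨2, ?_⟩
  rintro q ⟨N, hN, k, rfl⟩
  have hN1 : (1:ℝ) < (N:ℝ) := by exact_mod_cast hN
  have hlogN : 0 < Real.log N := Real.log_pos hN1
  rcases Nat.eq_zero_or_pos (NSetK D k N).ncard with h | h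
  · rw [h]; simpa using le_of_lt (by norm_num : (0:ℝ) < 2)
  · have hle : (NSetK D k ((N:ℕ):ℝ)).ncard ≤ (NSet D ((N:ℕ):ℝ)).ncard :=
      Set.ncard_le_ncard (fun ℓ hℓ => hℓ.1) (NSet_finite h2 _)
    have hcard : ((NSetK D k ((N:ℕ):ℝ)).ncard : ℝ) ≤ ((N:ℝ))^2 :=
      le_trans (by exact_mod_cast hle) (ncard_NSet_le h2 _ (by exact_mod_cast hN.trans' (by norm_num)))
    rw [div_le_iff₀ hlogN]
    calc Real.log ((NSetK D k ((N:ℕ):ℝ)).ncard) ≤ Real.log ((N:ℝ)^2) := by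
          apply Real.log_le_log (by exact_mod_cast h) hcard
    _ = 2 * Real.log N := by rw [Real.log_pow]; push_cast; ring

theorem sigmaD_nonneg (h2 : ∀ d ∈ D, 2 ≤ d) : 0 ≤ sigmaD D :=
  le_csSup (Q_bddAbove h2) (zero_mem_Q (D := D))

theorem NSetK_eq_floor (k : ℕ) (T : ℝ) (hT : 0 ≤ T) : NSetK D k T = NSetK D k ((⌊T⌋₊:ℕ):ℝ) := by
  ext ℓ
  simp only [NSetK, NSet, Set.mem_setOf_eq]
  constructor
  · rintro ⟨⟨ha, hb⟩, hc⟩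
    exact ⟨⟨ha, by exact_mod_cast Nat.le_floor hb⟩, hc⟩
  · rintro ⟨⟨ha, hb⟩, hc⟩
    have : (ℓ.prod : ℕ) ≤ ⌊T⌋₊ := by exact_mod_cast hb
    exact ⟨⟨ha, le_trans (by exact_mod_cast this) (Nat.floor_le hT)⟩, hc⟩

theorem NSetK_ncard_le_rpow (h2 : ∀ d ∈ D, 2 ≤ d) (k : ℕ) (T : ℝ) (hT : 2 ≤ T) :
    ((NSetK D k T).ncard : ℝ) ≤ T ^ (sigmaD D) := by
  have hT0 : (0:ℝ) ≤ T := by linarith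
  have hT1 : (1:ℝ) ≤ T := by linarith
  set N := ⌊T⌋₊ with hN
  have hN2 : 2 ≤ N := Nat.le_floor hT
  have hNR : (1:ℝ) < (N:ℝ) := by exact_mod_cast hN2
  have hTpos : (0:ℝ) < T := by linarith
  rw [NSetK_eq_floor k T hT0]
  rcases Nat.eq_zero_or_pos (NSetK D k ((N:ℕ):ℝ)).ncard with h | h
  · rw [h]; push_cast; positivity
  · have hq : Real.log ((NSetK D k ((N:ℕ):ℝ)).ncard) / Real.log N ≤ sigmaD D :=
      le_csSup (Q_bddAbove h2) ⟨N, hN2, k, rfl⟩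
    have hlogN : 0 < Real.log N := Real.log_pos hNR
    have h1 : Real.log ((NSetK D k ((N:ℕ):ℝ)).ncard) ≤ sigmaD D * Real.log N := by
      rw [div_le_iff₀ hlogN] at hq; linarith
    have hcpos : (0:ℝ) < ((NSetK D k ((N:ℕ):ℝ)).ncard : ℝ) := by exact_mod_cast h
    calc ((NSetK D k ((N:ℕ):ℝ)).ncard : ℝ) = Real.exp (Real.log ((NSetK D k ((N:ℕ):ℝ)).ncard)) :=
          (Real.exp_log hcpos).symm
    _ ≤ Real.exp (sigmaD D * Real.log N) := Real.exp_le_exp.mpr h1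
    _ = (N:ℝ) ^ (sigmaD D) := by
          rw [Real.rpow_def_of_pos (by linarith : (0:ℝ) < (N:ℝ))]
          ring_nf
    _ ≤ T ^ (sigmaD D) := Real.rpow_le_rpow (by linarith) (Nat.floor_le hT0) (sigmaD_nonneg h2)

theorem ncard_NSet_le_mul (h2 : ∀ d ∈ D, 2 ≤ d) (T : ℝ) (hT : 2 ≤ T) :
    ((NSet D T).ncard : ℝ) ≤ (⌊Real.log T / Real.log 2⌋₊ + 1) * T ^ (sigmaD D) := by
  classical
  set m := ⌊Real.log T / Real.log 2⌋₊ with hm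
  have hfin := NSet_finite h2 T
  have hlen : ∀ ℓ ∈ hfin.toFinset, ℓ.length ∈ Finset.range (m+1) := by
    intro ℓ hℓ
    rw [Set.Finite.mem_toFinset] at hℓ
    have h2p : 2^ℓ.length ≤ ℓ.prod := two_pow_length_le h2 ℓ hℓ.1
    have hR : ((2:ℝ))^ℓ.length ≤ T := le_trans (by exact_mod_cast h2p) hℓ.2
    have hlog : (ℓ.length : ℝ) * Real.log 2 ≤ Real.log T := by
      calc (ℓ.length : ℝ) * Real.log 2 = Real.log ((2:ℝ)^ℓ.length) := (Real.log_pow _ _).symm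
      _ ≤ Real.log T := Real.log_le_log (by positivity) hR
    have hlog2 : (0:ℝ) < Real.log 2 := Real.log_pos (by norm_num)
    have : (ℓ.length : ℝ) ≤ Real.log T / Real.log 2 := by
      rw [le_div_iff₀ hlog2]; exact hlog
    rw [Finset.mem_range, Nat.lt_succ_iff]
    exact Nat.le_floor this
  have hcard := Finset.card_eq_sum_card_fiberwise hlen
  have heq : ∀ k, (hfin.toFinset.filter (fun ℓ => ℓ.length = k)) = (NSetK_finite h2 k T).toFinset := by
    intro k
    ext ℓ
    simp only [Finset.mem_filter, Set.Finite.mem_toFinset]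
    exact ⟨fun ⟨a, b⟩ => ⟨a, b⟩, fun ⟨a, b⟩ => ⟨a, b⟩⟩
  have : ((NSet D T).ncard : ℝ) = ∑ k ∈ Finset.range (m+1), ((NSetK D k T).ncard : ℝ) := by
    rw [Set.ncard_eq_toFinset_card _ hfin, hcard]
    push_cast
    apply Finset.sum_congr rfl
    intro k _
    rw [heq k, ← Set.ncard_eq_toFinset_card _ (NSetK_finite h2 k T)]
  rw [this]
  calc ∑ k ∈ Finset.range (m+1), ((NSetK D k T).ncard : ℝ)
      ≤ ∑ k ∈ Finset.range (m+1), T ^ (sigmaD D) :=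
        Finset.sum_le_sum (fun k _ => NSetK_ncard_le_rpow h2 k T hT)
  _ = (m+1) * T ^ (sigmaD D) := by
        rw [Finset.sum_const, Finset.card_range]; push_cast; ring

theorem flatten_injOn (k : ℕ) : ∀ (n : ℕ) (f g : Fin n → List ℕ),
    (∀ i, (f i).length = k) → (∀ i, (g i).length = k) →
    (List.ofFn f).flatten = (List.ofFn g).flatten → f = g := by
  intro n
  induction n with
  | zero => intro f g _ _ _; funext i; exact i.elim0
  | succ n IH =>
    intro f g hf hg h
    rw [List.ofFn_succ, List.ofFn_succ, List.flatten_cons, List.flatten_cons] at h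
    have hlen : (f 0).length = (g 0).length := by rw [hf 0, hg 0]
    obtain ⟨h1, h2'⟩ := List.append_inj h hlen
    have := IH (fun i => f i.succ) (fun i => g i.succ) (fun i => hf i.succ) (fun i => hg i.succ) h2'
    funext i
    refine Fin.cases ?_ ?_ i
    · exact h1
    · intro j; exact congrFun this j

theorem concat_lower (h2 : ∀ d ∈ D, 2 ≤ d) (N₀ k n : ℕ) :
    (NSetK D k ((N₀:ℕ):ℝ)).ncard ^ n ≤ (NSet D (((N₀:ℕ):ℝ)^n)).ncard := by
  classical
  set S₀ := (NSetK_finite h2 k ((N₀:ℕ):ℝ)).toFinset with hS₀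
  set Pi := Fintype.piFinset (fun _ : Fin n => S₀) with hPi
  set J : (Fin n → List ℕ) → List ℕ := fun f => (List.ofFn f).flatten with hJ
  have hinj : Set.InjOn J ↑Pi := by
    intro f hf g hg h
    rw [Finset.mem_coe, Fintype.mem_piFinset] at hf hg
    refine flatten_injOn k n f g ?_ ?_ h
    · intro i; have := hf i; rw [hS₀, Set.Finite.mem_toFinset] at this; exact this.2
    · intro i; have := hg i; rw [hS₀, Set.Finite.mem_toFinset] at this; exact this.2
  have hsub : ↑(Pi.image J) ⊆ NSet D (((N₀:ℕ):ℝ)^n) := by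
    intro ℓ hℓ
    rw [Finset.coe_image] at hℓ
    obtain ⟨f, hf, rfl⟩ := hℓ
    rw [Finset.mem_coe, Fintype.mem_piFinset] at hf
    have hmem : ∀ i, f i ∈ NSetK D k ((N₀:ℕ):ℝ) := by
      intro i; have := hf i; rwa [hS₀, Set.Finite.mem_toFinset] at this
    constructor
    · intro d hd
      rw [hJ] at hd
      simp only [List.mem_flatten, List.mem_ofFn] at hd
      obtain ⟨l, ⟨i, rfl⟩, hdl⟩ := hd
      exact (hmem i).1.1 d hdl
    · have hprod : (J f).prod = ∏ i : Fin n, (f i).prod := by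
        rw [hJ]
        simp only [List.prod_flatten, List.map_ofFn]
        rw [List.prod_ofFn]
        rfl
      rw [hprod, Nat.cast_prod]
      calc ∏ i : Fin n, ((f i).prod : ℝ) ≤ ∏ _i : Fin n, ((N₀:ℕ):ℝ) := by
            apply Finset.prod_le_prod
            · intro i _; positivity
            · intro i _; exact (hmem i).1.2
      _ = ((N₀:ℕ):ℝ)^n := by rw [Finset.prod_const, Finset.card_univ, Fintype.card_fin]
  have hcard : (Pi.image J).card = (NSetK D k ((N₀:ℕ):ℝ)).ncard ^ n := by
    rw [Finset.card_image_of_injOn hinj, Fintype.card_piFinset]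
    rw [Finset.prod_const, Finset.card_univ, Fintype.card_fin]
    congr 1
    rw [hS₀, ← Set.ncard_eq_toFinset_card _ (NSetK_finite h2 k ((N₀:ℕ):ℝ))]
  calc (NSetK D k ((N₀:ℕ):ℝ)).ncard ^ n = (Pi.image J).card := hcard.symm
  _ = (↑(Pi.image J) : Set (List ℕ)).ncard := (Set.ncard_coe_finset _).symm
  _ ≤ (NSet D (((N₀:ℕ):ℝ)^n)).ncard := Set.ncard_le_ncard hsub (NSet_finite h2 _)

theorem counting_main (D : Set ℕ) (h2 : ∀ d ∈ D, 2 ≤ d) (hnt : D.Nontrivial) (ε : ℝ) (hε : 0 < ε) :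
    ∃ b : ℝ, 0 < b ∧ ∃ cl Cu T₀ : ℝ, 0 < cl ∧ 0 < Cu ∧ 2 ≤ T₀ ∧ ∀ T, T₀ ≤ T →
      cl * T ^ b ≤ ((NSet D T).ncard : ℝ) ∧ ((NSet D T).ncard : ℝ) ≤ Cu * T ^ (b + ε) := by
  obtain ⟨d, hd, d', hd', hdd⟩ := hnt
  set N₁ : ℕ := max d d' with hN₁
  have hN₁2 : 2 ≤ N₁ := le_trans (h2 d hd) (le_max_left _ _)
  have hmem1 : [d] ∈ NSetK D 1 ((N₁:ℕ):ℝ) := by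
    refine ⟨⟨?_, ?_⟩, rfl⟩
    · intro e he; rw [List.mem_singleton] at he; rwa [he]
    · simp only [List.prod_singleton]
      exact_mod_cast le_max_left d d'
  have hmem2 : [d'] ∈ NSetK D 1 ((N₁:ℕ):ℝ) := by
    refine ⟨⟨?_, ?_⟩, rfl⟩
    · intro e he; rw [List.mem_singleton] at he; rwa [he]
    · simp only [List.prod_singleton]
      exact_mod_cast le_max_right d d'
  have h2card : 2 ≤ (NSetK D 1 ((N₁:ℕ):ℝ)).ncard := by
    rw [Nat.succ_le_iff]
    rw [Set.one_lt_ncard_iff (NSetK_finite h2 1 _)]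
    exact ⟨[d], [d'], hmem1, hmem2, by simpa using hdd⟩
  set σ := sigmaD D with hσ
  have hσpos : 0 < σ := by
    have hq : Real.log ((NSetK D 1 ((N₁:ℕ):ℝ)).ncard) / Real.log N₁ ≤ σ :=
      le_csSup (Q_bddAbove h2) ⟨N₁, hN₁2, 1, rfl⟩
    have hlogN : 0 < Real.log N₁ := Real.log_pos (by exact_mod_cast hN₁2)
    have hlogc : 0 < Real.log ((NSetK D 1 ((N₁:ℕ):ℝ)).ncard) :=
      Real.log_pos (by exact_mod_cast h2card)
    exact lt_of_lt_of_le (by positivity) hq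
  set δ' := min (ε/2) (σ/2) with hδ'
  have hδ'pos : 0 < δ' := lt_min (by linarith) (by linarith)
  obtain ⟨q, hqQ, hq⟩ := exists_lt_of_lt_csSup
    (⟨0, zero_mem_Q (D := D)⟩ : Set.Nonempty _) (by linarith : σ - δ' < σ)
  obtain ⟨N₀, hN₀2, k₀, hqeq⟩ := hqQ
  set A := (NSetK D k₀ ((N₀:ℕ):ℝ)).ncard with hA
  set b := q with hb
  have hbpos : 0 < b := by
    have : σ/2 ≤ σ - δ' := by
      have := min_le_right (ε/2) (σ/2); simp only [← hδ'] at this; linarith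
    linarith
  have hσle : σ ≤ b + ε/2 := by
    have : δ' ≤ ε/2 := min_le_left _ _
    linarith
  have hlogN₀ : 0 < Real.log N₀ := Real.log_pos (by exact_mod_cast hN₀2)
  have hApos : 1 ≤ A := by
    rcases Nat.eq_zero_or_pos A with h0 | h0
    · exfalso
      have hb' := hbpos
      rw [hqeq, h0] at hb'
      simp at hb'
    · exact h0
  have hAb : ((A:ℕ):ℝ) = ((N₀:ℕ):ℝ) ^ b := by
    have hA0 : (0:ℝ) < ((A:ℕ):ℝ) := by exact_mod_cast hApos
    have hN₀pos : (0:ℝ) < ((N₀:ℕ):ℝ) := by exact_mod_cast lt_of_lt_of_le zero_lt_two hN₀2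
    have hbl : b * Real.log ((N₀:ℕ):ℝ) = Real.log ((A:ℕ):ℝ) := by
      rw [hqeq]; field_simp
    rw [Real.rpow_def_of_pos hN₀pos, mul_comm (Real.log ((N₀:ℕ):ℝ)) b, hbl, Real.exp_log hA0]
  refine ⟨b, hbpos, (A:ℝ)⁻¹, 2/(ε * Real.log 2) + 1, max ((N₀:ℕ):ℝ) 2, by positivity, ?_, le_max_right _ _, ?_⟩
  · have hlog2 : (0:ℝ) < Real.log 2 := Real.log_pos (by norm_num)
    positivity
  intro T hT
  have hT2 : (2:ℝ) ≤ T := le_trans (le_max_right _ _) hT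
  have hTN₀ : ((N₀:ℕ):ℝ) ≤ T := le_trans (le_max_left _ _) hT
  have hTpos : (0:ℝ) < T := by linarith
  have hT1 : (1:ℝ) ≤ T := by linarith
  have hlogT : 0 < Real.log T := Real.log_pos (by linarith)
  constructor
  · -- lower bound
    set n := ⌊Real.log T / Real.log N₀⌋₊ with hn
    have hnle : (n:ℝ) ≤ Real.log T / Real.log N₀ := Nat.floor_le (by positivity)
    have hpow : (((N₀:ℕ):ℝ))^n ≤ T := by
      have h1 : (n:ℝ) * Real.log N₀ ≤ Real.log T := by
        rw [← le_div_iff₀ hlogN₀]; exact hnle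
      calc (((N₀:ℕ):ℝ))^n = Real.exp ((n:ℝ) * Real.log N₀) := by
            rw [← Real.log_pow, Real.exp_log (by positivity)]
      _ ≤ Real.exp (Real.log T) := Real.exp_le_exp.mpr h1
      _ = T := Real.exp_log hTpos
    have hmono : (NSet D ((((N₀:ℕ):ℝ))^n)).ncard ≤ (NSet D T).ncard := by
      apply Set.ncard_le_ncard _ (NSet_finite h2 T)
      intro ℓ hℓ
      exact ⟨hℓ.1, le_trans hℓ.2 hpow⟩
    have hlow : (A:ℝ)^n ≤ ((NSet D T).ncard : ℝ) := by
      have := concat_lower h2 N₀ k₀ n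
      have h3 : A^n ≤ (NSet D T).ncard := le_trans this hmono
      exact_mod_cast h3
    have hfloor : Real.log T / Real.log N₀ - 1 < (n:ℝ) := by
      have := Nat.lt_floor_add_one (Real.log T / Real.log N₀)
      rw [← hn] at this
      linarith
    have hAn : T ^ b * ((A:ℝ))⁻¹ ≤ (A:ℝ)^n := by
      have hA0 : (0:ℝ) < (A:ℝ) := by exact_mod_cast hApos
      have e1 : (A:ℝ)^n = Real.exp ((n:ℝ) * (b * Real.log N₀)) := by
        rw [hAb, ← Real.rpow_natCast (((N₀:ℕ):ℝ) ^ b) n, ← Real.rpow_mul (by positivity)]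
        rw [Real.rpow_def_of_pos (by exact_mod_cast lt_of_lt_of_le zero_lt_two hN₀2)]
        ring_nf
      have e2 : T ^ b * ((A:ℝ))⁻¹ = Real.exp (b * Real.log T - b * Real.log N₀) := by
        rw [Real.exp_sub, hAb]
        rw [Real.rpow_def_of_pos hTpos, Real.rpow_def_of_pos (by exact_mod_cast lt_of_lt_of_le zero_lt_two hN₀2)]
        ring_nf
      rw [e1, e2]
      apply Real.exp_le_exp.mpr
      have hb0 : 0 ≤ b := le_of_lt hbpos
      have h5 : Real.log T < ((n:ℝ)+1) * Real.log ((N₀:ℕ):ℝ) := by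
        rw [← div_lt_iff₀ hlogN₀]
        linarith [hfloor]
      have h6 : b * Real.log T ≤ b * (((n:ℝ)+1) * Real.log ((N₀:ℕ):ℝ)) :=
        mul_le_mul_of_nonneg_left (le_of_lt h5) hb0
      nlinarith [h6]
    calc (A:ℝ)⁻¹ * T ^ b = T ^ b * (A:ℝ)⁻¹ := by ring
    _ ≤ (A:ℝ)^n := hAn
    _ ≤ ((NSet D T).ncard : ℝ) := hlow
  · -- upper bound
    have hup := ncard_NSet_le_mul h2 T hT2
    set m := ⌊Real.log T / Real.log 2⌋₊ with hm
    have hlog2 : (0:ℝ) < Real.log 2 := Real.log_pos (by norm_num)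
    have hm1 : (m:ℝ) + 1 ≤ Real.log T / Real.log 2 + 1 := by
      have := Nat.floor_le (by positivity : (0:ℝ) ≤ Real.log T / Real.log 2)
      linarith
    have hrpos : (0:ℝ) < T ^ (ε/2) := Real.rpow_pos_of_pos hTpos _
    have hr1 : (1:ℝ) ≤ T ^ (ε/2) := Real.one_le_rpow hT1 (by linarith)
    have hlogle : Real.log T ≤ (2/ε) * T ^ (ε/2) := by
      have h1 : Real.log (T ^ (ε/2)) = (ε/2) * Real.log T := Real.log_rpow hTpos _
      have h2' : Real.log (T ^ (ε/2)) ≤ T ^ (ε/2) := by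
        have := Real.log_le_sub_one_of_pos hrpos
        linarith
      rw [h1] at h2'
      rw [div_mul_eq_mul_div, le_div_iff₀ hε]
      linarith [h2']
    have hfac : (m:ℝ) + 1 ≤ (2/(ε * Real.log 2) + 1) * T ^ (ε/2) := by
      have h3 : Real.log T / Real.log 2 ≤ (2/(ε * Real.log 2)) * T ^ (ε/2) := by
        rw [div_le_iff₀ hlog2]
        calc Real.log T ≤ (2/ε) * T ^ (ε/2) := hlogle
        _ = (2/(ε * Real.log 2)) * T ^ (ε/2) * Real.log 2 := by
              field_simp
      nlinarith
    have hTσ : T ^ σ ≤ T ^ (b + ε/2) := Real.rpow_le_rpow_of_exponent_le hT1 hσle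
    have hTσpos : (0:ℝ) ≤ T ^ σ := le_of_lt (Real.rpow_pos_of_pos hTpos _)
    calc ((NSet D T).ncard : ℝ) ≤ ((m:ℝ) + 1) * T ^ σ := hup
    _ ≤ ((2/(ε * Real.log 2) + 1) * T ^ (ε/2)) * T ^ (b + ε/2) := by
        have hm0 : (0:ℝ) ≤ (m:ℝ) + 1 := by positivity
        have := mul_le_mul hfac hTσ hTσpos (by positivity)
        linarith
    _ = (2/(ε * Real.log 2) + 1) * T ^ (b + ε) := by
        rw [mul_assoc, ← Real.rpow_add hTpos]
        ring_nf


theorem ratH_phi_le (c x : ℚ) (d : ℕ) : ratH (x^d + c) ≤ (2 * ratH c) * ratH x ^ d := by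
  have := ratH_add_le (x^d) c
  rw [ratH_pow] at this
  linarith

theorem ratH_phi_ge (c x : ℚ) (d : ℕ) : ratH x ^ d ≤ (2 * ratH c) * ratH (x^d + c) := by
  have h1 : x^d = (x^d + c) + (-c) := by ring
  have h2 := ratH_add_le (x^d + c) (-c)
  rw [ratH_neg] at h2
  rw [← ratH_pow]
  calc ratH (x^d) = ratH ((x^d + c) + (-c)) := by rw [← h1]
  _ ≤ 2 * ratH (x^d + c) * ratH c := h2
  _ = (2 * ratH c) * ratH (x^d + c) := by ring

theorem stmt9 (𝔡 : Set ℕ)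
    (hdeg : ∀ d ∈ 𝔡, 2 ≤ d)
    (hnt : 𝔡.Nontrivial)
    (hlogdisc : ∃ δ : ℝ, 0 < δ ∧ ∀ d ∈ 𝔡, ∀ d' ∈ 𝔡, d ≠ d' →
      |Real.log (d : ℝ) - Real.log (d' : ℝ)| > δ)
    (c : ℚ) (hc : c ≠ 0)
    (S : Set (Polynomial ℚ))
    (hS : S = {φ : Polynomial ℚ | ∃ d ∈ 𝔡, φ = X ^ d + C c}) :
    ∀ ε : ℝ, 0 < ε → ∃ b : ℝ, 0 < b ∧ ∃ B₀ : ℝ, ∀ P : ℚ, ratH P > B₀ →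
      ∃ c₁ c₂ B₁ : ℝ, 0 < c₁ ∧ 0 < c₂ ∧ ∀ B : ℝ, B₁ ≤ B →
        ({L : List (Polynomial ℚ) | (∀ φ ∈ L, φ ∈ S) ∧ ratH (applyList L P) ≤ B}).Finite ∧
        c₁ * Real.log B ^ b ≤
          (({L : List (Polynomial ℚ) | (∀ φ ∈ L, φ ∈ S) ∧ ratH (applyList L P) ≤ B}).ncard : ℝ) ∧
        (({L : List (Polynomial ℚ) | (∀ φ ∈ L, φ ∈ S) ∧ ratH (applyList L P) ≤ B}).ncard : ℝ) ≤
          c₂ * Real.log B ^ (b + ε) := by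
  intro ε hε
  obtain ⟨b, hb, cl, Cu, T₀, hcl, hCu, hT₀2, hcount⟩ := counting_main 𝔡 hdeg hnt ε hε
  set K := 2 * ratH c with hKdef
  have hK2 : 2 ≤ K := by
    have := one_le_ratH c
    rw [hKdef]; linarith
  have hK1 : 1 ≤ K := by linarith
  have hK0 : 0 < K := by linarith
  refine ⟨b, hb, K^2, ?_⟩
  intro P hP
  have hHP1 : 1 ≤ ratH P := one_le_ratH P
  set HP := ratH P with hHPdef
  have hHPK : K * K < HP := by rw [← sq]; exact hP
  have hHPKpos : 1 < HP / K := by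
    rw [lt_div_iff₀ hK0]; nlinarith
  have hKHP : 1 < K * HP := by nlinarith
  set lKH := Real.log (K * HP) with hlKH
  set lHK := Real.log (HP / K) with hlHK
  have hlKHpos : 0 < lKH := Real.log_pos hKHP
  have hlHKpos : 0 < lHK := Real.log_pos hHPKpos
  have hlle : lHK ≤ lKH := by
    apply Real.log_le_log (by positivity)
    rw [div_le_iff₀ hK0]
    nlinarith
  -- telescoping bounds
  have B1 : ∀ L : List (Polynomial ℚ), (∀ φ ∈ L, φ ∈ S) →
      K * ratH (applyList L P) ≤ (K * HP) ^ ((L.map Polynomial.natDegree).prod) := by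
    intro L
    induction L with
    | nil => intro _; simp [applyList, hHPdef]
    | cons φ L IH =>
      intro hmem
      have hφ := hmem φ List.mem_cons_self
      rw [hS] at hφ
      obtain ⟨d, hd𝔡, rfl⟩ := hφ
      have hd2 : 2 ≤ d := hdeg d hd𝔡
      have hIH := IH (fun ψ hψ => hmem ψ (List.mem_cons_of_mem _ hψ))
      set Q := applyList L P with hQ
      have heval : applyList ((X^d + C c) :: L) P = Q^d + c := by
        simp [applyList, hQ]
      have hdeg' : (X^d + C c : Polynomial ℚ).natDegree = d := natDegree_X_pow_add_C
      rw [heval, List.map_cons, List.prod_cons, hdeg']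
      have h1 : K * ratH (Q^d + c) ≤ K * ((2 * ratH c) * ratH Q ^ d) :=
        mul_le_mul_of_nonneg_left (ratH_phi_le c Q d) (le_of_lt hK0)
      have h2 : K * ((2 * ratH c) * ratH Q ^ d) = K^2 * ratH Q ^ d := by
        rw [hKdef]; ring
      have h3 : K^2 * ratH Q ^ d ≤ K^d * ratH Q ^ d := by
        apply mul_le_mul_of_nonneg_right (pow_le_pow_right₀ hK1 hd2)
        exact pow_nonneg (ratH_nonneg Q) d
      have h4 : K^d * ratH Q ^ d = (K * ratH Q)^d := (mul_pow K (ratH Q) d).symm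
      have h5 : (K * ratH Q)^d ≤ ((K * HP) ^ ((L.map Polynomial.natDegree).prod))^d := by
        apply pow_le_pow_left₀ (mul_nonneg (le_of_lt hK0) (ratH_nonneg Q)) hIH
      rw [← pow_mul, Nat.mul_comm] at h5
      linarith
  have B2 : ∀ L : List (Polynomial ℚ), (∀ φ ∈ L, φ ∈ S) →
      (HP / K) ^ ((L.map Polynomial.natDegree).prod) ≤ ratH (applyList L P) / K := by
    intro L
    induction L with
    | nil => intro _; simp [applyList, hHPdef]
    | cons φ L IH =>
      intro hmem
      have hφ := hmem φ List.mem_cons_self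
      rw [hS] at hφ
      obtain ⟨d, hd𝔡, rfl⟩ := hφ
      have hd2 : 2 ≤ d := hdeg d hd𝔡
      have hIH := IH (fun ψ hψ => hmem ψ (List.mem_cons_of_mem _ hψ))
      set Q := applyList L P with hQ
      have heval : applyList ((X^d + C c) :: L) P = Q^d + c := by
        simp [applyList, hQ]
      have hdeg' : (X^d + C c : Polynomial ℚ).natDegree = d := natDegree_X_pow_add_C
      rw [heval, List.map_cons, List.prod_cons, hdeg']
      have h1 : ratH Q ^ d ≤ K * ratH (Q^d + c) := ratH_phi_ge c Q d
      have h2 : (ratH Q / K)^d ≤ ratH (Q^d + c) / K := by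
        rw [div_pow, div_le_div_iff₀ (by positivity) hK0]
        have hKd : K^2 ≤ K^d := pow_le_pow_right₀ hK1 hd2
        have h0 : 0 ≤ ratH (Q^d + c) := ratH_nonneg _
        nlinarith [pow_nonneg (ratH_nonneg Q) d, pow_pos hK0 d]
      have h3 : ((HP / K) ^ ((L.map Polynomial.natDegree).prod))^d ≤ (ratH Q / K)^d := by
        apply pow_le_pow_left₀ (pow_nonneg (le_of_lt (lt_trans zero_lt_one hHPKpos)) _) hIH
      rw [← pow_mul, Nat.mul_comm] at h3
      linarith
  -- correspondence
  set τ : List (Polynomial ℚ) → List ℕ := fun L => L.map Polynomial.natDegree with hτ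
  set σc : ℕ → Polynomial ℚ := fun d => X^d + C c with hσc
  have hleftinv : ∀ L : List (Polynomial ℚ), (∀ φ ∈ L, φ ∈ S) → (τ L).map σc = L := by
    intro L
    induction L with
    | nil => intro _; rfl
    | cons φ L IH =>
      intro hmem
      have hφ := hmem φ List.mem_cons_self
      rw [hS] at hφ
      obtain ⟨d, hd𝔡, rfl⟩ := hφ
      have : (X^d + C c : Polynomial ℚ).natDegree = d := natDegree_X_pow_add_C
      simp only [hτ, List.map_cons, hσc, this]
      rw [IH (fun ψ hψ => hmem ψ (List.mem_cons_of_mem _ hψ))]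
  have hσcdeg : ∀ d : ℕ, (σc d).natDegree = d := fun d => natDegree_X_pow_add_C
  have hσcinj : Function.Injective σc := by
    intro d e h
    have := congrArg Polynomial.natDegree h
    rwa [hσcdeg, hσcdeg] at this
  have hmapinv : ∀ ℓ : List ℕ, ((ℓ.map σc).map Polynomial.natDegree) = ℓ := by
    intro ℓ
    rw [List.map_map]
    conv_rhs => rw [← List.map_id ℓ]
    apply List.map_congr_left
    intro d _
    exact hσcdeg d
  refine ⟨cl / lKH ^ b, Cu / lHK ^ (b + ε), Real.exp (T₀ * lKH),
    div_pos hcl (Real.rpow_pos_of_pos hlKHpos b),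
    div_pos hCu (Real.rpow_pos_of_pos hlHKpos (b + ε)), ?_⟩
  intro B hB
  have hlogB : T₀ * lKH ≤ Real.log B := by
    have hBpos : 0 < B := lt_of_lt_of_le (Real.exp_pos _) hB
    calc T₀ * lKH = Real.log (Real.exp (T₀ * lKH)) := (Real.log_exp _).symm
    _ ≤ Real.log B := Real.log_le_log (Real.exp_pos _) hB
  have hBpos : 0 < B := lt_of_lt_of_le (Real.exp_pos _) hB
  have hlogBpos : 0 < Real.log B := by nlinarith
  set T₁ := Real.log B / lKH with hT₁
  set T₂ := Real.log B / lHK with hT₂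
  have hT₁T₀ : T₀ ≤ T₁ := by rw [hT₁, le_div_iff₀ hlKHpos]; linarith
  have hT₂T₁ : T₁ ≤ T₂ := by
    rw [hT₁, hT₂]
    apply div_le_div_of_nonneg_left (le_of_lt hlogBpos) hlHKpos hlle
  have hT₂T₀ : T₀ ≤ T₂ := le_trans hT₁T₀ hT₂T₁
  set PL := {L : List (Polynomial ℚ) | (∀ φ ∈ L, φ ∈ S) ∧ ratH (applyList L P) ≤ B} with hPL
  -- upper: τ '' PL ⊆ NSet 𝔡 T₂
  have himg : τ '' PL ⊆ NSet 𝔡 T₂ := by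
    rintro ℓ ⟨L, hL, rfl⟩
    obtain ⟨hLS, hLB⟩ := hL
    constructor
    · intro d hd
      rw [hτ] at hd
      simp only [List.mem_map] at hd
      obtain ⟨φ, hφL, rfl⟩ := hd
      have hφ := hLS φ hφL
      rw [hS] at hφ
      obtain ⟨e, he𝔡, rfl⟩ := hφ
      rwa [natDegree_X_pow_add_C]
    · have hb2 := B2 L hLS
      set D := ((L.map Polynomial.natDegree).prod) with hD
      have hpow : (HP / K) ^ D ≤ B := by
        have : ratH (applyList L P) / K ≤ B := by
          have h0 : 0 ≤ ratH (applyList L P) := ratH_nonneg _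
          rw [div_le_iff₀ hK0]; nlinarith
        linarith
      have hlog : (D:ℝ) * lHK ≤ Real.log B := by
        calc (D:ℝ) * lHK = Real.log ((HP / K) ^ D) := (Real.log_pow (HP / K) D).symm
        _ ≤ Real.log B := Real.log_le_log (pow_pos (by linarith) D) hpow
      have hfin : ((D:ℝ)) ≤ T₂ := by
        rw [hT₂, le_div_iff₀ hlHKpos]; exact hlog
      exact hfin
  have hinjOn : Set.InjOn τ PL := by
    intro L1 h1 L2 h2 h
    have e1 := hleftinv L1 h1.1
    have e2 := hleftinv L2 h2.1
    rw [← e1, ← e2, h]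
  have hNfin := NSet_finite hdeg T₂
  have hPLfin : PL.Finite :=
    Set.Finite.of_finite_image (Set.Finite.subset hNfin himg) hinjOn
  have hupper : (PL.ncard : ℝ) ≤ ((NSet 𝔡 T₂).ncard : ℝ) := by
    have : PL.ncard = (τ '' PL).ncard := (Set.ncard_image_of_injOn hinjOn).symm
    rw [this]
    exact_mod_cast Set.ncard_le_ncard himg hNfin
  -- lower: (fun ℓ => ℓ.map σc) '' NSet 𝔡 T₁ ⊆ PL
  have himg2 : (fun ℓ : List ℕ => ℓ.map σc) '' NSet 𝔡 T₁ ⊆ PL := by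
    rintro L ⟨ℓ, ⟨hℓ𝔡, hℓprod⟩, rfl⟩
    have hmemS : ∀ φ ∈ ℓ.map σc, φ ∈ S := by
      intro φ hφ
      simp only [List.mem_map] at hφ
      obtain ⟨d, hdℓ, rfl⟩ := hφ
      rw [hS]
      exact ⟨d, hℓ𝔡 d hdℓ, rfl⟩
    refine ⟨hmemS, ?_⟩
    have hb1 := B1 (ℓ.map σc) hmemS
    have hτσ : ((ℓ.map σc).map Polynomial.natDegree).prod = ℓ.prod := by rw [hmapinv ℓ]
    rw [hτσ] at hb1
    have hlog : (ℓ.prod : ℝ) * lKH ≤ Real.log B := by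
      have : (ℓ.prod : ℝ) ≤ T₁ := hℓprod
      rw [hT₁] at this
      calc (ℓ.prod : ℝ) * lKH ≤ (Real.log B / lKH) * lKH := by
            apply mul_le_mul_of_nonneg_right this (le_of_lt hlKHpos)
      _ = Real.log B := by field_simp
    have hpow : (K * HP) ^ ℓ.prod ≤ B := by
      have h1 : Real.log ((K * HP) ^ ℓ.prod) ≤ Real.log B := by
        rw [Real.log_pow]; exact hlog
      exact (Real.log_le_log_iff (pow_pos (by linarith) _) hBpos).mp h1
    have h0 : 0 ≤ ratH (applyList (ℓ.map σc) P) := ratH_nonneg _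
    have h00 : ratH (applyList (ℓ.map σc) P) ≤ K * ratH (applyList (ℓ.map σc) P) :=
      le_mul_of_one_le_left h0 hK1
    linarith
  have hinj2 : Set.InjOn (fun ℓ : List ℕ => ℓ.map σc) (NSet 𝔡 T₁) := by
    intro ℓ1 _ ℓ2 _ h
    have := congrArg (fun L : List (Polynomial ℚ) => L.map Polynomial.natDegree) h
    simpa only [hmapinv ℓ1, hmapinv ℓ2] using this
  have hlower : ((NSet 𝔡 T₁).ncard : ℝ) ≤ (PL.ncard : ℝ) := by
    have e : (NSet 𝔡 T₁).ncard = ((fun ℓ : List ℕ => ℓ.map σc) '' NSet 𝔡 T₁).ncard :=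
      (Set.ncard_image_of_injOn hinj2).symm
    rw [e]
    exact_mod_cast Set.ncard_le_ncard himg2 hPLfin
  obtain ⟨hc1, hc2⟩ := hcount T₁ hT₁T₀
  obtain ⟨hc1', hc2'⟩ := hcount T₂ hT₂T₀
  refine ⟨hPLfin, ?_, ?_⟩
  · -- lower bound
    have heq : cl / lKH ^ b * Real.log B ^ b = cl * T₁ ^ b := by
      rw [hT₁, Real.div_rpow (le_of_lt hlogBpos) (le_of_lt hlKHpos)]
      ring
    rw [heq]
    exact le_trans hc1 hlower
  · -- upper bound
    have heq : Cu / lHK ^ (b + ε) * Real.log B ^ (b + ε) = Cu * T₂ ^ (b + ε) := by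
      rw [hT₂, Real.div_rpow (le_of_lt hlogBpos) (le_of_lt hlHKpos)]
      ring
    rw [heq]
    exact le_trans hupper hc2'
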